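/- Every distributive G⁰-algebra is a De Morgan algebra (a distributive lattice with an involutive order-reversing negation) under the operations x ∨ y = (x ≻ y) ≻ y, x ∧ y = ∼(∼x ∨ ∼y), and ∼x = x ≻ 0, with greatest element 1. -/

import Mathlib

/-!
The relation `x ≤ y :↔ x ≻ y = 1` is a partial order in which `(x ≻ y) ≻ y` is the join and
`x ↦ x ≻ y` is antitone. In a G⁰-algebra `∼x = x ≻ 0` is an antitone involution, so
`∼(∼x ∨ ∼y)` is the meet and the De Morgan laws hold. Distributivity makes
`(a ∧ b) ≻ c = (a ≻ c) ∨ (b ≻ c)`, and together with the identity `(a ∨ b) ≻ c = (a ≻ c) ∧ (b ≻ c)`,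
valid in every G⁰-algebra, this gives `(a ∨ b) ∧ (a ∨ c) ≤ a ∨ (b ∧ c)`.
-/

class GAlgebra (A : Type*) where
  succ : A → A → A
  one : A
  g1 : ∀ x, succ one x = x
  g2 : ∀ x, succ x one = one
  g3 : ∀ x y, succ (succ x y) y = succ (succ y x) x
  g4 : ∀ x y z, succ x (succ y z) = one → succ y (succ x z) = one

open GAlgebra

local infixr:70 " ≻ " => GAlgebra.succ

class G0Algebra (A : Type*) extends GAlgebra A where
  zero : A
  g17 : ∀ x, succ zero x = one

open G0Algebra

namespace GAlgebra

variable {A : Type*} [GAlgebra A]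

theorem succ_self (x : A) : x ≻ x = one := by
  simpa only [g1, g2] using (g3 x one).symm

theorem succ_eq_one_trans {x y z : A} (hxy : x ≻ y = one) (hyz : y ≻ z = one) :
    x ≻ z = one := by
  have hz : (z ≻ y) ≻ y = z := by rw [g3, hyz, g1]
  simpa only [hz] using g4 (z ≻ y) x y (by rw [hxy, g2])

abbrev toPartialOrder : PartialOrder A where
  le x y := x ≻ y = one
  le_refl := succ_self
  le_trans _ _ _ := succ_eq_one_trans
  le_antisymm x y hxy hyx := by simpa only [hxy, hyx, g1] using (g3 x y).symm

attribute [local instance] toPartialOrder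

theorem le_iff_succ_eq_one {x y : A} : x ≤ y ↔ x ≻ y = one := Iff.rfl

theorem le_one (x : A) : x ≤ one := g2 x

theorem le_succ_comm {x y z : A} (h : x ≤ y ≻ z) : y ≤ x ≻ z := g4 x y z h

def join (x y : A) : A := (x ≻ y) ≻ y

theorem join_comm (x y : A) : join x y = join y x := g3 x y

theorem le_join_right (x y : A) : y ≤ join x y :=
  le_succ_comm (show x ≻ y ≤ y ≻ y by rw [succ_self]; exact le_one _)

theorem le_join_left (x y : A) : x ≤ join x y := join_comm y x ▸ le_join_right y x

theorem succ_le_succ_of_le {x y : A} (h : x ≤ y) (c : A) : y ≻ c ≤ x ≻ c :=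
  le_succ_comm (h.trans (le_join_left y c))

theorem join_le {x y c : A} (hx : x ≤ c) (hy : y ≤ c) : join x y ≤ c := by
  have hc : (c ≻ y) ≻ y = c := by rw [g3, le_iff_succ_eq_one.mp hy, g1]
  have h := succ_le_succ_of_le (succ_le_succ_of_le hx y) y
  rwa [hc] at h

abbrev toSemilatticeSup : SemilatticeSup A where
  sup := join
  le_sup_left := le_join_left
  le_sup_right := le_join_right
  sup_le _ _ _ := join_le

end GAlgebra

namespace G0Algebra

attribute [local instance] GAlgebra.toPartialOrder

variable {A : Type*} [G0Algebra A]

def neg (x : A) : A := x ≻ zero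

def meet (x y : A) : A := neg (join (neg x) (neg y))

theorem neg_involutive : Function.Involutive (neg : A → A) := fun x => by
  rw [neg, neg, g3, g17, g1]

theorem neg_antitone : Antitone (neg : A → A) := fun _ _ h => succ_le_succ_of_le h zero

theorem neg_join (x y : A) : neg (join x y) = meet (neg x) (neg y) := by
  rw [meet, neg_involutive, neg_involutive]

theorem meet_le_left (x y : A) : meet x y ≤ x := by
  have h := neg_antitone (le_join_left (neg x) (neg y))
  rwa [neg_involutive] at h

theorem meet_le_right (x y : A) : meet x y ≤ y := by
  have h := neg_antitone (le_join_right (neg x) (neg y))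
  rwa [neg_involutive] at h

theorem le_meet {c x y : A} (hx : c ≤ x) (hy : c ≤ y) : c ≤ meet x y := by
  have h := neg_antitone (join_le (neg_antitone hx) (neg_antitone hy))
  rwa [neg_involutive] at h

theorem one_meet (x : A) : meet one x = x :=
  le_antisymm (meet_le_right one x) (le_meet (le_one x) le_rfl)

theorem join_succ (a b c : A) : join a b ≻ c = meet (a ≻ c) (b ≻ c) := by
  refine le_antisymm (le_meet (succ_le_succ_of_le (le_join_left a b) c)
    (succ_le_succ_of_le (le_join_right a b) c)) (le_succ_comm (join_le ?_ ?_))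
  · exact le_succ_comm (meet_le_left _ _)
  · exact le_succ_comm (meet_le_right _ _)

abbrev toLattice : Lattice A :=
  { GAlgebra.toSemilatticeSup with
    inf := meet
    inf_le_left := meet_le_left
    inf_le_right := meet_le_right
    le_inf _ _ _ := le_meet }

def IsDistributive (A : Type*) [G0Algebra A] : Prop :=
  ∀ a b c : A, meet a b ≻ c ≤ join (a ≻ c) (b ≻ c)

theorem IsDistributive.meet_succ (hA : IsDistributive A) (a b c : A) :
    meet a b ≻ c = join (a ≻ c) (b ≻ c) :=
  le_antisymm (hA a b c) (join_le (succ_le_succ_of_le (meet_le_left a b) c)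
    (succ_le_succ_of_le (meet_le_right a b) c))

theorem IsDistributive.meet_join_le (hA : IsDistributive A) (a b c : A) :
    meet (join a b) (join a c) ≤ join a (meet b c) := by
  set r := join a (meet b c)
  have ha : a ≤ r := le_join_left a (meet b c)
  have hbc : meet b c ≤ r := le_join_right a (meet b c)
  have hb : join a b ≻ r = b ≻ r := by rw [join_succ, ha, one_meet]
  have hc : join a c ≻ r = c ≻ r := by rw [join_succ, ha, one_meet]
  rw [le_iff_succ_eq_one, hA.meet_succ, hb, hc, ← hA.meet_succ, ← le_iff_succ_eq_one]
  exact hbc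

abbrev IsDistributive.toDistribLattice (hA : IsDistributive A) : DistribLattice A :=
  { toLattice with le_sup_inf := hA.meet_join_le }

end G0Algebra

theorem stmt15 {A : Type*} [G0Algebra A]
    (neg : A → A) (hneg : ∀ a : A, neg a = a ≻ (zero : A))
    (sup : A → A → A) (hsup : ∀ a b : A, sup a b = (a ≻ b) ≻ b)
    (inf : A → A → A) (hinf : ∀ a b : A, inf a b = neg (sup (neg a) (neg b)))
    (hdist : ∀ a b c : A, ((inf a b) ≻ c) ≻ (sup (a ≻ c) (b ≻ c)) = (one : A)) :
    (∀ x y : A, sup x y = sup y x) ∧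
    (∀ x y z : A, sup (sup x y) z = sup x (sup y z)) ∧
    (∀ x y : A, inf x y = inf y x) ∧
    (∀ x y z : A, inf (inf x y) z = inf x (inf y z)) ∧
    (∀ x y : A, inf x (sup x y) = x) ∧
    (∀ x y : A, sup x (inf x y) = x) ∧
    (∀ x y z : A, inf x (sup y z) = sup (inf x y) (inf x z)) ∧
    (∀ x : A, neg (neg x) = x) ∧
    (∀ x y : A, neg (sup x y) = inf (neg x) (neg y)) ∧
    (∀ x : A, sup x (one : A) = (one : A)) := by
  obtain rfl : neg = G0Algebra.neg := funext hneg
  obtain rfl : sup = join := funext₂ hsup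
  obtain rfl : inf = meet := funext₂ hinf
  let _ : DistribLattice A := IsDistributive.toDistribLattice hdist
  exact ⟨sup_comm, sup_assoc, inf_comm, inf_assoc, fun _ _ => inf_sup_self, fun _ _ => sup_inf_self, inf_sup_left,
    neg_involutive, neg_join, fun x => g2 (x ≻ one)⟩
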